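/- arXiv:2605.30203 — 2 statements merged into one kernel-verified Lean document; each statement's English description precedes it below -/
import Mathlib

section
/- Let (Ω, 𝒜, P) be a probability space, let n, d ≥ 1, let μ : Fin d → ℝ satisfy 0 < μ j < 1 for every j, and let X : Fin n → Fin d → Ω → ℕ be an independent Bernoulli array with parameter μ. Let y : Fin d → ℕ satisfy y j ≤ 1 and let k : Fin d → ℕ satisfy y j ≤ k j ≤ n for every j. Then P({ω : for every j, y j + Σ_{i < n−1} X i j (ω) = k j}) / P({ω : for every j, Σ_{i < n} X i j (ω) = k j}) = ∏_{j ∈ Fin d} (if y j = 1 then (k j / n) / μ j else (1 − k j / n) / (1 − μ j)); in particular the denominator probability is strictly positive. (Ratio Equality: for a product-distributed population the Bayesian decision ratio equals the likelihood ratio test statistic.) -/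
open MeasureTheory ProbabilityTheory Finset

/-- `X : Fin n → Fin d → Ω → ℕ` is an independent Bernoulli array with parameter
`μ : Fin d → ℝ` if the family `(X i j)` indexed by pairs `(i, j)` is mutually
independent, and each `X i j` takes only the values `0` and `1` with
`P(X i j = 1) = μ j`. -/
def IsBernoulliArray {Ω : Type*} [MeasurableSpace Ω] (P : Measure Ω)
    {n d : ℕ} (X : Fin n → Fin d → Ω → ℕ) (μ : Fin d → ℝ) : Prop :=
  (∀ i j, Measurable (X i j)) ∧
  iIndepFun
    (fun p : Fin n × Fin d => X p.1 p.2) P ∧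
  (∀ i j ω, X i j ω = 0 ∨ X i j ω = 1) ∧
  (∀ i j, (P {ω | X i j ω = 1}).toReal = μ j)

/-! For an array with `m` rows, record for each column `j` the set `s j` of rows where
`X i j = 1`. By independence each configuration `s` has probability
`∏ j, μ j ^ #(s j) * (1 - μ j) ^ (m - #(s j))`, and the event "column `j` sums to `c j` for all
`j`" is the disjoint union of the configurations with `#(s j) = c j`; hence its probability is a
product of binomial masses `C(m, c j) μ j ^ c j (1 - μ j) ^ (m - c j)`. The first `n - 1` rows
again form a Bernoulli array, so numerator and denominator are both of this form, and the ratio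
reduces column by column to `(m + 1) C(m, c) = (c + 1) C(m + 1, c + 1)` when `y j = 1` and to
`(m + 1) C(m, c) = (m + 1 - c) C(m + 1, c)` when `y j = 0`. -/

noncomputable def binomialMass (m c : ℕ) (p : ℝ) : ℝ :=
  m.choose c * p ^ c * (1 - p) ^ (m - c)

lemma binomialMass_pos {m c : ℕ} {p : ℝ} (hc : c ≤ m) (hp₀ : 0 < p) (hp₁ : p < 1) :
    0 < binomialMass m c p := by
  unfold binomialMass
  have := Nat.choose_pos hc
  have : 0 < 1 - p := sub_pos.2 hp₁
  positivity

lemma binomialMass_div_binomialMass_succ_succ {m c : ℕ} {p : ℝ} (hc : c ≤ m) (hp₀ : 0 < p)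
    (hp₁ : p < 1) :
    binomialMass m c p / binomialMass (m + 1) (c + 1) p = ((c + 1 : ℝ) / (m + 1)) / p := by
  have hchoose :
      ((m + 1 : ℕ) : ℝ) * m.choose c = (m + 1).choose (c + 1) * ((c + 1 : ℕ) : ℝ) := by
    exact_mod_cast Nat.add_one_mul_choose_eq m c
  push_cast at hchoose
  rw [div_div, div_eq_div_iff (binomialMass_pos (by omega) hp₀ hp₁).ne' (by positivity)]
  unfold binomialMass
  rw [Nat.add_sub_add_right]
  linear_combination (p ^ (c + 1) * (1 - p) ^ (m - c)) * hchoose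

lemma binomialMass_div_binomialMass_succ {m c : ℕ} {p : ℝ} (hc : c ≤ m + 1) (hp₀ : 0 < p)
    (hp₁ : p < 1) :
    binomialMass m c p / binomialMass (m + 1) c p = (1 - (c : ℝ) / (m + 1)) / (1 - p) := by
  have hchoose : (m.choose c : ℝ) * ((m + 1 : ℕ) : ℝ) =
      (m + 1).choose c * ((m + 1 - c : ℕ) : ℝ) := by
    exact_mod_cast Nat.choose_mul_succ_eq m c
  rw [Nat.cast_sub hc] at hchoose
  push_cast at hchoose
  have : 0 < 1 - p := sub_pos.2 hp₁
  rw [one_sub_div (by positivity), div_div,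
    div_eq_div_iff (binomialMass_pos hc hp₀ hp₁).ne' (by positivity)]
  unfold binomialMass
  rcases hc.lt_or_eq with hc | rfl
  · rw [show m + 1 - c = m - c + 1 by omega, pow_succ]
    linear_combination (p ^ c * (1 - p) ^ (m - c) * (1 - p)) * hchoose
  · simp

lemma binomialMass_sub_div_binomialMass_succ {m k y : ℕ} {p : ℝ} (hy : y ≤ 1) (hyk : y ≤ k)
    (hk : k ≤ m + 1) (hp₀ : 0 < p) (hp₁ : p < 1) :
    binomialMass m (k - y) p / binomialMass (m + 1) k p =
      if y = 1 then ((k : ℝ) / (m + 1)) / p else (1 - (k : ℝ) / (m + 1)) / (1 - p) := by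
  interval_cases y
  · simpa using binomialMass_div_binomialMass_succ hk hp₀ hp₁
  · obtain ⟨c, rfl⟩ : ∃ c, k = c + 1 := ⟨k - 1, by omega⟩
    simpa using binomialMass_div_binomialMass_succ_succ (by omega : c ≤ m) hp₀ hp₁

lemma Fin.sum_filter_val_lt_eq_sum_castSucc {M : Type*} [AddCommMonoid M] {m : ℕ}
    (f : Fin (m + 1) → M) :
    ∑ i ∈ univ.filter (fun i : Fin (m + 1) => (i : ℕ) < m), f i =
      ∑ i : Fin m, f i.castSucc := by
  rw [sum_filter, Fin.sum_univ_castSucc]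
  simp

lemma prod_ite_mem_eq_pow_mul_pow {ι M : Type*} [Fintype ι] [DecidableEq ι] [CommMonoid M]
    (t : Finset ι) (a b : M) :
    ∏ i, (if i ∈ t then a else b) = a ^ #t * b ^ (Fintype.card ι - #t) := by
  simp [prod_ite, filter_not, card_sdiff]

def successes {Ω : Type*} {m d : ℕ} (X : Fin m → Fin d → Ω → ℕ) (ω : Ω) (j : Fin d) :
    Finset (Fin m) :=
  {i | X i j ω = 1}

namespace IsBernoulliArray

variable {Ω : Type*} [MeasurableSpace Ω] {P : Measure Ω} {m d : ℕ}
  {X : Fin m → Fin d → Ω → ℕ} {μ : Fin d → ℝ}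

lemma comp_injective {l : ℕ} (hX : IsBernoulliArray P X μ) {f : Fin l → Fin m}
    (hf : f.Injective) : IsBernoulliArray P (fun i => X (f i)) μ := by
  obtain ⟨hmeas, hindep, hval, hprob⟩ := hX
  exact ⟨fun i j => hmeas (f i) j, hindep.precomp (hf.prodMap Function.injective_id),
    fun i j => hval (f i) j, fun i j => hprob (f i) j⟩

lemma sum_eq_card_successes (hX : IsBernoulliArray P X μ) (ω : Ω) (j : Fin d) :
    ∑ i, X i j ω = #(successes X ω j) := by
  rw [successes, card_filter]
  refine sum_congr rfl fun i _ => ?_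
  rcases hX.2.2.1 i j ω with h | h <;> simp [h]

lemma measureReal_eq_ite [IsProbabilityMeasure P] (hX : IsBernoulliArray P X μ) (i : Fin m)
    (j : Fin d) (q : Prop) [Decidable q] :
    P.real {ω | X i j ω = if q then 1 else 0} = if q then μ j else 1 - μ j := by
  obtain ⟨hmeas, -, hval, hprob⟩ := hX
  split_ifs
  · rw [measureReal_def, hprob]
  · have hzero : {ω | X i j ω = 0} = {ω | X i j ω = 1}ᶜ := by
      ext ω
      rcases hval i j ω with h | h <;> simp [h]
    have hone : MeasurableSet {ω | X i j ω = 1} := hmeas i j (measurableSet_singleton 1)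
    rw [hzero, measureReal_compl hone, probReal_univ, measureReal_def, hprob]

lemma successes_eq_iff (hX : IsBernoulliArray P X μ) (ω : Ω) (s : Fin d → Finset (Fin m)) :
    successes X ω = s ↔
      ∀ p : Fin m × Fin d, X p.1 p.2 ω = if p.1 ∈ s p.2 then 1 else 0 := by
  simp only [funext_iff, Finset.ext_iff, successes, mem_filter_univ, Prod.forall]
  constructor
  · intro h i j
    specialize h j i
    rcases hX.2.2.1 i j ω with hx | hx <;> simp_all
  · intro h j i
    rw [h]
    split_ifs <;> simp_all

lemma setOf_successes_eq_iInter (hX : IsBernoulliArray P X μ) (s : Fin d → Finset (Fin m)) :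
    {ω | successes X ω = s} =
      ⋂ p : Fin m × Fin d, X p.1 p.2 ⁻¹' {if p.1 ∈ s p.2 then 1 else 0} := by
  ext ω
  simp [hX.successes_eq_iff]

lemma measureReal_successes_eq [IsProbabilityMeasure P] (hX : IsBernoulliArray P X μ)
    (s : Fin d → Finset (Fin m)) :
    P.real {ω | successes X ω = s} = ∏ j, μ j ^ #(s j) * (1 - μ j) ^ (m - #(s j)) := by
  rw [hX.setOf_successes_eq_iInter, measureReal_def,
    hX.2.1.meas_iInter fun p => ⟨_, measurableSet_singleton _, rfl⟩, ENNReal.toReal_prod,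
    Fintype.prod_prod_type_right]
  refine prod_congr rfl fun j _ => (prod_congr rfl fun i _ => hX.measureReal_eq_ite i j _).trans ?_
  simpa using prod_ite_mem_eq_pow_mul_pow (s j) (μ j) (1 - μ j)

lemma measureReal_colSums_eq [IsProbabilityMeasure P] (hX : IsBernoulliArray P X μ)
    (c : Fin d → ℕ) :
    P.real {ω | ∀ j, ∑ i, X i j ω = c j} = ∏ j, binomialMass m (c j) (μ j) := by
  let S := Fintype.piFinset fun j => powersetCard (c j) (univ : Finset (Fin m))
  have hevent : {ω | ∀ j, ∑ i, X i j ω = c j} = successes X ⁻¹' S := by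
    ext ω
    simp [S, hX.sum_eq_card_successes]
  have hmeas (s) : MeasurableSet (successes X ⁻¹' {s}) := by
    change MeasurableSet {ω | successes X ω = s}
    rw [hX.setOf_successes_eq_iInter]
    exact .iInter fun p => hX.1 p.1 p.2 (measurableSet_singleton _)
  rw [hevent, ← sum_measureReal_preimage_singleton S fun s _ => hmeas s]
  calc ∑ s ∈ S, P.real (successes X ⁻¹' {s})
      = ∑ s ∈ S, ∏ j, μ j ^ #(s j) * (1 - μ j) ^ (m - #(s j)) :=
        sum_congr rfl fun s _ => hX.measureReal_successes_eq s
    _ = ∏ j, ∑ t ∈ powersetCard (c j) (univ : Finset (Fin m)),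
          μ j ^ #t * (1 - μ j) ^ (m - #t) := by
        rw [prod_univ_sum]
    _ = ∏ j, binomialMass m (c j) (μ j) := by
        refine prod_congr rfl fun j _ => ?_
        have hcard (t) (ht : t ∈ powersetCard (c j) (univ : Finset (Fin m))) :
            μ j ^ #t * (1 - μ j) ^ (m - #t) = μ j ^ c j * (1 - μ j) ^ (m - c j) := by
          rw [(mem_powersetCard.1 ht).2]
        rw [sum_congr rfl hcard, sum_const, card_powersetCard, card_univ, Fintype.card_fin,
          nsmul_eq_mul, binomialMass, mul_assoc]

end IsBernoulliArray

theorem ratio_equality_general {Ω : Type*} [MeasurableSpace Ω] (P : Measure Ω)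
    [IsProbabilityMeasure P] (n d : ℕ) (hn : 1 ≤ n)
    (μ : Fin d → ℝ) (hμ : ∀ j, 0 < μ j ∧ μ j < 1)
    (X : Fin n → Fin d → Ω → ℕ) (hX : IsBernoulliArray P X μ)
    (y : Fin d → ℕ) (hy : ∀ j, y j ≤ 1)
    (k : Fin d → ℕ) (hk : ∀ j, y j ≤ k j ∧ k j ≤ n) :
    0 < (P {ω | ∀ j, (∑ i : Fin n, X i j ω) = k j}).toReal ∧
    (P {ω | ∀ j, y j + ∑ i ∈ univ.filter (fun i : Fin n => (i : ℕ) < n - 1),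
        X i j ω = k j}).toReal /
      (P {ω | ∀ j, (∑ i : Fin n, X i j ω) = k j}).toReal =
    ∏ j : Fin d,
      (if y j = 1 then ((k j : ℝ) / n) / μ j
        else (1 - (k j : ℝ) / n) / (1 - μ j)) := by
  obtain ⟨m, rfl⟩ : ∃ m, n = m + 1 := ⟨n - 1, by omega⟩
  have hfirst : IsBernoulliArray P (fun i : Fin m => X i.castSucc) μ :=
    hX.comp_injective (Fin.castSucc_injective m)
  have hevent :
      {ω | ∀ j, y j + ∑ i ∈ univ.filter (fun i : Fin (m + 1) => (i : ℕ) < m + 1 - 1),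
        X i j ω = k j} = {ω | ∀ j, ∑ i : Fin m, X i.castSucc j ω = k j - y j} := by
    refine Set.ext fun ω => forall_congr' fun j => ?_
    rw [add_tsub_cancel_right, Fin.sum_filter_val_lt_eq_sum_castSucc]
    have := (hk j).1
    omega
  simp only [← measureReal_def, hevent, hX.measureReal_colSums_eq, hfirst.measureReal_colSums_eq,
    ← prod_div_distrib]
  refine ⟨prod_pos fun j _ => binomialMass_pos (hk j).2 (hμ j).1 (hμ j).2,
    prod_congr rfl fun j _ => ?_⟩
  push_cast
  exact binomialMass_sub_div_binomialMass_succ (hy j) (hk j).1 (hk j).2 (hμ j).1 (hμ j).2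

/-- **Ratio Equality.** For a product-distributed (independent Bernoulli)
population, the Bayesian decision ratio equals the likelihood ratio test
statistic; in particular the denominator probability is strictly positive. -/
theorem ratio_equality {Ω : Type*} [MeasurableSpace Ω] (P : Measure Ω)
    [IsProbabilityMeasure P] (n d : ℕ) (hn : 1 ≤ n) (hd : 1 ≤ d)
    (μ : Fin d → ℝ) (hμ : ∀ j, 0 < μ j ∧ μ j < 1)
    (X : Fin n → Fin d → Ω → ℕ) (hX : IsBernoulliArray P X μ)
    (y : Fin d → ℕ) (hy : ∀ j, y j ≤ 1)
    (k : Fin d → ℕ) (hk : ∀ j, y j ≤ k j ∧ k j ≤ n) :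
    0 < (P {ω | ∀ j, (∑ i : Fin n, X i j ω) = k j}).toReal ∧
    (P {ω | ∀ j, y j + ∑ i ∈ univ.filter (fun i : Fin n => (i : ℕ) < n - 1),
        X i j ω = k j}).toReal /
      (P {ω | ∀ j, (∑ i : Fin n, X i j ω) = k j}).toReal =
    ∏ j : Fin d,
      (if y j = 1 then ((k j : ℝ) / n) / μ j
        else (1 - (k j : ℝ) / n) / (1 - μ j)) :=
  ratio_equality_general P n d hn μ hμ X hX y hy k hk
end

section
/- Let (Ω, 𝒜, P) be a probability space, let n, d ≥ 1 and 1 ≤ m ≤ d, let μ : Fin d → ℝ satisfy 0 < μ j < 1 for every j ≤ m, and let X : Fin n → Fin d → Ω → ℕ have right-repeated structure with midpoint m and parameter μ. Let θ : Ω → Bool satisfy P(θ = true) = 1/2 with θ independent of the whole family (X i j). Let y : Fin d → ℕ and k : Fin d → ℕ satisfy: y j ≤ 1 and y j ≤ k j ≤ n for every j ≤ m, and k j = k m and y j = y m for every j > m. Define E := {ω : if θ(ω) = true then for every j, y j + Σ_{i < n−1} X i j (ω) = k j, else for every j, Σ_{i < n} X i j (ω) = k j}. Then P(E) > 0, P(θ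 = true | E) < 1, and for every real threshold T: P(θ = true | E) / (1 − P(θ = true | E)) > T if and only if ∏_{j ≤ m} (if y j = 1 then (k j / n) / μ j else (1 − k j / n) / (1 − μ j)) > T. (Half Distributed Correctness: on a population whose attributes above the midpoint are exact copies of attribute m — the half-repeated population being the instance m = ⌊d/2⌋ + 1 — the Bayesian posterior-odds attack with threshold T is equivalent to the likelihood ratio test attack clipped to the first m attributes with the same threshold.) -/
open MeasureTheory ProbabilityTheory Finset

/-!
Given `θ`, the event `E` says either that the column sums of the first `n - 1` records are
`k - y` (when `θ` is true) or that the column sums of all `n` records are `k`. Since the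
attributes above `m` are copies of attribute `m` and `k`, `y` are constant there, both conditions
only need to be checked on the first `m` attributes, whose column sums are independent binomial
counts. Bayes' rule in odds form, with prior odds `1` because `θ` is a fair coin independent of
the data, turns the posterior odds into the ratio of the two binomial probabilities, and
attribute by attribute `b(n - 1, k - y, μ) / b(n, k, μ)` is `k / (n μ)` when `y = 1` and
`(1 - k / n) / (1 - μ)` when `y = 0`.
-/

/-- `X : Fin n → Fin d → Ω → ℕ` has *right-repeated structure* with midpoint `m`
(in one-based terms, `1 ≤ m ≤ d`, corresponding to the zero-based index `m - 1`)
and parameter `μ`: the subfamily `(X i j)` over all records `i` and attributes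
`j ≤ m` (zero-based `(j : ℕ) < m`) is mutually independent, each such `X i j` is
`{0,1}`-valued with `P(X i j = 1) = μ j`, and every attribute `j > m` (zero-based
`m ≤ (j : ℕ)`) is an exact copy of attribute `m` (zero-based index `m - 1`). -/
def RightRepeated {Ω : Type*} [MeasurableSpace Ω] (P : Measure Ω)
    {n d : ℕ} (m : ℕ) (X : Fin n → Fin d → Ω → ℕ) (μ : Fin d → ℝ) : Prop :=
  (∀ i j, Measurable (X i j)) ∧
  iIndepFun
    (fun p : Fin n × {j : Fin d // (j : ℕ) < m} => X p.1 p.2.1) P ∧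
  (∀ i, ∀ j : Fin d, (j : ℕ) < m →
    (∀ ω, X i j ω = 0 ∨ X i j ω = 1) ∧ (P {ω | X i j ω = 1}).toReal = μ j) ∧
  (∀ i, ∀ j : Fin d, m ≤ (j : ℕ) →
    ∀ jm : Fin d, (jm : ℕ) = m - 1 → X i j = X i jm)

-- `Bin(n, p).real {k}` of Mathlib, for a real parameter `p`.
def binomialWeight (n k : ℕ) (p : ℝ) : ℝ := n.choose k * p ^ k * (1 - p) ^ (n - k)

lemma binomialWeight_pos {n k : ℕ} {p : ℝ} (hkn : k ≤ n) (hp₀ : 0 < p) (hp₁ : p < 1) :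
    0 < binomialWeight n k p := by
  have := Nat.choose_pos hkn
  have : 0 < 1 - p := by linarith
  unfold binomialWeight
  positivity

lemma binomialWeight_sub_one_sub_one {n k : ℕ} {p : ℝ} (hk : 1 ≤ k) (hkn : k ≤ n)
    (hp : p ≠ 0) :
    binomialWeight (n - 1) (k - 1) p = (k / n) / p * binomialWeight n k p := by
  obtain ⟨k, rfl⟩ := Nat.exists_eq_add_of_le' hk
  obtain ⟨n, rfl⟩ := Nat.exists_eq_add_of_le' (hk.trans hkn)
  have hchoose : ((n + 1 : ℕ) : ℝ) * n.choose k = (n + 1).choose (k + 1) * (k + 1 : ℕ) := by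
    exact_mod_cast Nat.add_one_mul_choose_eq n k
  simp only [binomialWeight, Nat.add_sub_cancel, Nat.add_sub_add_right]
  push_cast at hchoose ⊢
  field_simp
  linear_combination (p ^ (k + 1) * (1 - p) ^ (n - k)) * hchoose

lemma binomialWeight_sub_one {n k : ℕ} {p : ℝ} (hn : 1 ≤ n) (hkn : k ≤ n) (hp : p ≠ 1) :
    binomialWeight (n - 1) k p = (1 - k / n) / (1 - p) * binomialWeight n k p := by
  obtain ⟨n, rfl⟩ := Nat.exists_eq_add_of_le' hn
  rcases hkn.lt_or_eq with hlt | rfl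
  · have hchoose : (n.choose k : ℝ) * (n + 1 : ℕ) = (n + 1).choose k * (n + 1 - k : ℕ) := by
      exact_mod_cast Nat.choose_mul_succ_eq n k
    have hexp : n + 1 - k = n - k + 1 := by omega
    simp only [binomialWeight, Nat.add_sub_cancel, hexp, pow_succ]
    rw [Nat.cast_sub hlt.le] at hchoose
    push_cast at hchoose ⊢
    field_simp
    linear_combination p ^ k * hchoose
  · have : (n : ℝ) + 1 ≠ 0 := by positivity
    simp [binomialWeight, this]

lemma binomialWeight_sub_div_binomialWeight {n k y : ℕ} {p : ℝ} (hn : 1 ≤ n) (hy : y ≤ 1)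
    (hyk : y ≤ k) (hkn : k ≤ n) (hp₀ : 0 < p) (hp₁ : p < 1) :
    binomialWeight (n - 1) (k - y) p / binomialWeight n k p =
      if y = 1 then (k / n) / p else (1 - k / n) / (1 - p) := by
  rw [div_eq_iff (binomialWeight_pos hkn hp₀ hp₁).ne']
  interval_cases y
  · simpa using binomialWeight_sub_one hn hkn hp₁.ne
  · simpa using binomialWeight_sub_one_sub_one hyk hkn hp₀.ne'

lemma sum_powersetCard_prod_ite {M α : Type*} [CommSemiring M] [DecidableEq α] (s : Finset α)
    (r : ℕ) (a b : M) :
    ∑ t ∈ s.powersetCard r, ∏ i ∈ s, (if i ∈ t then a else b) =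
      (#s).choose r * a ^ r * b ^ (#s - r) := by
  have hterm : ∀ t ∈ s.powersetCard r,
      ∏ i ∈ s, (if i ∈ t then a else b) = a ^ r * b ^ (#s - r) := by
    intro t ht
    obtain ⟨hts, rfl⟩ := mem_powersetCard.mp ht
    rw [prod_ite, filter_mem_eq_inter, inter_eq_right.mpr hts, prod_const, prod_const,
      filter_not, filter_mem_eq_inter, inter_eq_right.mpr hts, card_sdiff_of_subset hts]
  rw [sum_congr rfl hterm, sum_const, card_powersetCard, nsmul_eq_mul, mul_assoc]

lemma sum_eq_card_filter_eq_one {α : Type*} (s : Finset α) {v : α → ℕ}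
    (hv : ∀ i ∈ s, v i = 0 ∨ v i = 1) : ∑ i ∈ s, v i = #{i ∈ s | v i = 1} := by
  rw [card_filter]
  exact sum_congr rfl fun i hi => by rcases hv i hi with h | h <;> simp [h]

lemma setOf_forall_filter_eq_one_eq {Ω α β : Type*} [DecidableEq α] [Fintype β]
    {Z : α × β → Ω → ℕ} (s : Finset α) {g : β → Finset α} (hg : ∀ j, g j ⊆ s) :
    {ω | ∀ j, {i ∈ s | Z (i, j) ω = 1} = g j} =
      ⋂ p ∈ s ×ˢ univ, Z p ⁻¹' (if p.1 ∈ g p.2 then {1} else {1}ᶜ) := by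
  ext ω
  simp only [Set.mem_ofPred_eq, Set.mem_iInter, mem_product, mem_univ, and_true, Finset.ext_iff,
    mem_filter, Prod.forall, Set.mem_preimage]
  refine ⟨fun h i j hi => ?_, fun h j i => ?_⟩
  · by_cases hij : i ∈ g j
    · simpa [hij] using ((h j i).mpr hij).2
    · simpa [hij] using fun hz => hij ((h j i).mp ⟨hi, hz⟩)
  · by_cases hi : i ∈ s
    · by_cases hij : i ∈ g j <;> simpa [hij, hi] using h i j hi
    · simpa [hi] using fun h => hi (hg j h)

section Bernoulli

variable {Ω α β : Type*} [MeasurableSpace Ω] {P : Measure Ω} [IsProbabilityMeasure P]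
  [DecidableEq α] [Fintype β] {Z : α × β → Ω → ℕ}

lemma measurableSet_forall_filter_eq_one_eq (hZ : ∀ p, Measurable (Z p)) (s : Finset α)
    {g : β → Finset α} (hg : ∀ j, g j ⊆ s) :
    MeasurableSet {ω | ∀ j, {i ∈ s | Z (i, j) ω = 1} = g j} := by
  rw [setOf_forall_filter_eq_one_eq s hg]
  refine Finset.measurableSet_biInter _ fun p _ => hZ p ?_
  split_ifs <;> measurability

lemma measureReal_forall_filter_eq_one_eq (hZ : ∀ p, Measurable (Z p)) (hind : iIndepFun Z P)
    (s : Finset α) {g : β → Finset α} (hg : ∀ j, g j ⊆ s) :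
    P.real {ω | ∀ j, {i ∈ s | Z (i, j) ω = 1} = g j} =
      ∏ j, ∏ i ∈ s, if i ∈ g j then P.real (Z (i, j) ⁻¹' {1})
        else 1 - P.real (Z (i, j) ⁻¹' {1}) := by
  have hsets : ∀ p ∈ s ×ˢ univ,
      MeasurableSet (if p.1 ∈ g p.2 then {1} else {(1 : ℕ)}ᶜ) :=
    fun p _ => by split_ifs <;> measurability
  rw [setOf_forall_filter_eq_one_eq s hg, measureReal_def,
    hind.measure_inter_preimage_eq_mul _ hsets, ENNReal.toReal_prod, prod_product_right]
  refine prod_congr rfl fun j _ => prod_congr rfl fun i _ => ?_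
  split_ifs
  · rfl
  · rw [Set.preimage_compl, ← measureReal_def, probReal_compl_eq_one_sub (hZ _ (by simp))]

theorem measureReal_forall_sum_eq_prod_binomialWeight (hZ : ∀ p, Measurable (Z p))
    (hind : iIndepFun Z P) (h01 : ∀ p ω, Z p ω = 0 ∨ Z p ω = 1) {q : β → ℝ}
    (hq : ∀ i j, P.real (Z (i, j) ⁻¹' {1}) = q j) (s : Finset α) (r : β → ℕ) :
    P.real {ω | ∀ j, ∑ i ∈ s, Z (i, j) ω = r j} = ∏ j, binomialWeight #s (r j) (q j) := by
  classical
  -- The event is the disjoint union of the fibres of `G` over the `g` with `#(g j) = r j`.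
  set G : Ω → β → Finset α := fun ω j => {i ∈ s | Z (i, j) ω = 1}
  have hG : ∀ g ∈ Fintype.piFinset fun j => s.powersetCard (r j),
      G ⁻¹' {g} = {ω | ∀ j, {i ∈ s | Z (i, j) ω = 1} = g j} := fun g _ => by
    ext ω; simp [G, funext_iff]
  have hsub : ∀ g ∈ Fintype.piFinset fun j => s.powersetCard (r j), ∀ j, g j ⊆ s :=
    fun g hg j => (mem_powersetCard.mp (Fintype.mem_piFinset.mp hg j)).1
  have hevent : {ω | ∀ j, ∑ i ∈ s, Z (i, j) ω = r j} =
      G ⁻¹' ↑(Fintype.piFinset fun j => s.powersetCard (r j)) := by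
    ext ω
    simp [G, sum_eq_card_filter_eq_one s fun i _ => h01 _ ω]
  rw [hevent, ← sum_measureReal_preimage_singleton _ fun g hg => by
    rw [hG g hg]; exact measurableSet_forall_filter_eq_one_eq hZ s (hsub g hg)]
  calc ∑ g ∈ Fintype.piFinset (fun j => s.powersetCard (r j)), P.real (G ⁻¹' {g})
      = ∑ g ∈ Fintype.piFinset (fun j => s.powersetCard (r j)),
          ∏ j, ∏ i ∈ s, (if i ∈ g j then q j else 1 - q j) :=
        sum_congr rfl fun g hg => by
          simp only [hG g hg, measureReal_forall_filter_eq_one_eq hZ hind s (hsub g hg), hq]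
    _ = ∏ j, ∑ t ∈ s.powersetCard (r j), ∏ i ∈ s, (if i ∈ t then q j else 1 - q j) :=
        (prod_univ_sum (fun j => s.powersetCard (r j))
          fun j t => ∏ i ∈ s, (if i ∈ t then q j else 1 - q j)).symm
    _ = ∏ j, binomialWeight #s (r j) (q j) := by
        simp only [sum_powersetCard_prod_ite, binomialWeight]

end Bernoulli

lemma toReal_cond_apply {Ω : Type*} [MeasurableSpace Ω] (P : Measure Ω) {s : Set Ω}
    (hs : MeasurableSet s) (t : Set Ω) : (P[t | s]).toReal = P.real (s ∩ t) / P.real s := by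
  rw [cond_apply hs, ENNReal.toReal_mul, ENNReal.toReal_inv, div_eq_inv_mul, measureReal_def,
    measureReal_def]

lemma ProbabilityTheory.IndepFun.measureReal_inter_preimage_eq_mul {Ω β γ : Type*}
    [MeasurableSpace Ω] [MeasurableSpace β] [MeasurableSpace γ] {P : Measure Ω} {f : Ω → β}
    {g : Ω → γ} (h : IndepFun f g P) {s : Set β} {t : Set γ} (hs : MeasurableSet s)
    (ht : MeasurableSet t) :
    P.real (f ⁻¹' s ∩ g ⁻¹' t) = P.real (f ⁻¹' s) * P.real (g ⁻¹' t) := by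
  simp only [measureReal_def, h.measure_inter_preimage_eq_mul s t hs ht, ENNReal.toReal_mul]

lemma setOf_ite_mem_eq_union {Ω β : Type*} (θ : Ω → Bool) (V : Ω → β) (A B : Set β) :
    {ω | if θ ω = true then V ω ∈ A else V ω ∈ B} =
      ({ω | θ ω = true} ∩ V ⁻¹' A) ∪ ({ω | θ ω = true}ᶜ ∩ V ⁻¹' B) := by
  ext ω
  cases h : θ ω <;> simp [h]

section Bayes

variable {Ω β : Type*} [MeasurableSpace Ω] [MeasurableSpace β] {P : Measure Ω}
  [IsProbabilityMeasure P] {θ : Ω → Bool} {V : Ω → β} {A B : Set β}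

lemma measureReal_setOf_ite_mem (hθ : Measurable θ) (hV : Measurable V) (hind : IndepFun θ V P)
    (hA : MeasurableSet A) (hB : MeasurableSet B) :
    P.real {ω | if θ ω = true then V ω ∈ A else V ω ∈ B} =
      P.real {ω | θ ω = true} * P.real (V ⁻¹' A) +
        (1 - P.real {ω | θ ω = true}) * P.real (V ⁻¹' B) := by
  have hΘ : MeasurableSet {ω | θ ω = true} := hθ (measurableSet_singleton true)
  have hΘc : {ω | θ ω = true}ᶜ = θ ⁻¹' {false} := by ext ω; simp
  have hdisj :
      Disjoint ({ω | θ ω = true} ∩ V ⁻¹' A) ({ω | θ ω = true}ᶜ ∩ V ⁻¹' B) :=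
    Set.disjoint_left.mpr fun _ h h' => h'.1 h.1
  rw [setOf_ite_mem_eq_union, measureReal_union hdisj (hΘ.compl.inter (hV hB)),
    ← probReal_compl_eq_one_sub hΘ, hΘc]
  congr 1
  · exact hind.measureReal_inter_preimage_eq_mul (measurableSet_singleton true) hA
  · exact hind.measureReal_inter_preimage_eq_mul (measurableSet_singleton false) hB

theorem posterior_odds_eq (hθ : Measurable θ) (hV : Measurable V) (hind : IndepFun θ V P)
    (hA : MeasurableSet A) (hB : MeasurableSet B) (hB₀ : 0 < P.real (V ⁻¹' B))
    (hπ : P.real {ω | θ ω = true} < 1) {E : Set Ω}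
    (hE : E = {ω | if θ ω = true then V ω ∈ A else V ω ∈ B}) :
    0 < P.real E ∧ (P[{ω | θ ω = true} | E]).toReal < 1 ∧
      (P[{ω | θ ω = true} | E]).toReal / (1 - (P[{ω | θ ω = true} | E]).toReal) =
        P.real {ω | θ ω = true} / (1 - P.real {ω | θ ω = true}) *
          (P.real (V ⁻¹' A) / P.real (V ⁻¹' B)) := by
  set π := P.real {ω | θ ω = true}
  set a := P.real (V ⁻¹' A)
  set b := P.real (V ⁻¹' B)
  have hPE : P.real E = π * a + (1 - π) * b := hE ▸ measureReal_setOf_ite_mem hθ hV hind hA hB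
  have hEmeas : MeasurableSet E := by
    rw [hE, setOf_ite_mem_eq_union]
    exact ((hθ (measurableSet_singleton _)).inter (hV hA)).union
      ((hθ (measurableSet_singleton _)).compl.inter (hV hB))
  have hEΘ : E ∩ {ω | θ ω = true} = θ ⁻¹' {true} ∩ V ⁻¹' A := by
    ext ω
    cases h : θ ω <;> simp [hE, h]
  have hq : (P[{ω | θ ω = true} | E]).toReal = π * a / (π * a + (1 - π) * b) := by
    rw [toReal_cond_apply P hEmeas, hEΘ,
      hind.measureReal_inter_preimage_eq_mul (measurableSet_singleton _) hA, hPE]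
    rfl
  have hπa : 0 ≤ π * a := mul_nonneg measureReal_nonneg measureReal_nonneg
  have hπb : 0 < (1 - π) * b := mul_pos (by linarith) hB₀
  refine ⟨by linarith, ?_, ?_⟩
  · rw [hq, div_lt_one (by linarith)]
    linarith
  · rw [hq, one_sub_div (by linarith), add_sub_cancel_left,
      div_div_div_cancel_right₀ (by linarith)]
    field_simp [hB₀.ne']

end Bayes

namespace RightRepeated

variable {Ω : Type*} [MeasurableSpace Ω] {P : Measure Ω} {n d m : ℕ}
  {X : Fin n → Fin d → Ω → ℕ} {μ : Fin d → ℝ}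

lemma forall_iff_forall_lt (hX : RightRepeated P m X μ) (hm : 1 ≤ m) (hmd : m ≤ d)
    {c : Fin d → (Fin n → ℕ) → Prop}
    (hc : ∀ j : Fin d, m ≤ j → c j = c ⟨m - 1, by omega⟩) (ω : Ω) :
    (∀ j, c j (X · j ω)) ↔ ∀ j : {j : Fin d // (j : ℕ) < m}, c j (X · j ω) := by
  refine ⟨fun h j => h j, fun h j => ?_⟩
  by_cases hj : (j : ℕ) < m
  · exact h ⟨j, hj⟩
  · have hcopy : (X · j ω) = (X · ⟨m - 1, by omega⟩ ω) :=
      funext fun i => congrFun (hX.2.2.2 i j (not_lt.mp hj) _ rfl) ω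
    rw [hcopy, hc j (not_lt.mp hj)]
    exact h ⟨_, by simp; omega⟩

lemma forall_add_sum_eq_iff (hX : RightRepeated P m X μ) (hm : 1 ≤ m) (hmd : m ≤ d)
    {y k : Fin d → ℕ} (hyk : ∀ j : Fin d, (j : ℕ) < m → y j ≤ k j)
    (hrep : ∀ j : Fin d, m ≤ (j : ℕ) →
      k j = k ⟨m - 1, by omega⟩ ∧ y j = y ⟨m - 1, by omega⟩)
    (s : Finset (Fin n)) (ω : Ω) :
    (∀ j, y j + ∑ i ∈ s, X i j ω = k j) ↔
      ∀ j : {j : Fin d // (j : ℕ) < m}, ∑ i ∈ s, X i j ω = k j - y j := by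
  rw [hX.forall_iff_forall_lt hm hmd (c := fun j v => y j + ∑ i ∈ s, v i = k j)
    fun j hj => by simp only [(hrep j hj).1, (hrep j hj).2]]
  exact forall_congr' fun j => by have := hyk j j.2; dsimp only; omega

lemma measureReal_forall_sum_eq [IsProbabilityMeasure P] (hX : RightRepeated P m X μ)
    (s : Finset (Fin n)) (r : Fin d → ℕ) :
    P.real {ω | ∀ j : {j : Fin d // (j : ℕ) < m}, ∑ i ∈ s, X i j ω = r j} =
      ∏ j ∈ univ.filter (fun j : Fin d => (j : ℕ) < m), binomialWeight #s (r j) (μ j) := by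
  rw [prod_subtype _ (p := fun j : Fin d => (j : ℕ) < m) fun j => by simp]
  exact measureReal_forall_sum_eq_prod_binomialWeight
    (Z := fun p : Fin n × {j : Fin d // (j : ℕ) < m} => X p.1 p.2) (fun p => hX.1 _ _) hX.2.1
    (fun p => (hX.2.2.1 _ _ p.2.2).1) (fun i j => (hX.2.2.1 i j j.2).2) s (r ·)

end RightRepeated

/-- **Half Distributed Correctness.** On a population whose attributes above the
midpoint `m` are exact copies of attribute `m` (the half-repeated population
being `m = ⌊d/2⌋ + 1`), the Bayesian posterior-odds attack with threshold `T`
is equivalent to the likelihood ratio test attack clipped to the first `m`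
attributes with the same threshold. -/
theorem half_distributed_correctness {Ω : Type*} [MeasurableSpace Ω]
    (P : Measure Ω) [IsProbabilityMeasure P] (n d m : ℕ)
    (hn : 1 ≤ n) (hm : 1 ≤ m) (hmd : m ≤ d)
    (μ : Fin d → ℝ) (hμ : ∀ j : Fin d, (j : ℕ) < m → 0 < μ j ∧ μ j < 1)
    (X : Fin n → Fin d → Ω → ℕ) (hX : RightRepeated P m X μ)
    (θ : Ω → Bool) (hθmeas : Measurable θ)
    (hθhalf : (P {ω | θ ω = true}).toReal = 1 / 2)
    (hθindep : IndepFun θ (fun ω (p : Fin n × Fin d) => X p.1 p.2 ω) P)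
    (y : Fin d → ℕ) (k : Fin d → ℕ)
    (hyk : ∀ j : Fin d, (j : ℕ) < m → y j ≤ 1 ∧ y j ≤ k j ∧ k j ≤ n)
    (hrep : ∀ j : Fin d, m ≤ (j : ℕ) →
      k j = k ⟨m - 1, by omega⟩ ∧ y j = y ⟨m - 1, by omega⟩)
    (E : Set Ω)
    (hE : E = {ω | if θ ω = true
      then ∀ j, y j + ∑ i ∈ univ.filter (fun i : Fin n => (i : ℕ) < n - 1),
        X i j ω = k j
      else ∀ j, (∑ i : Fin n, X i j ω) = k j}) :
    0 < (P E).toReal ∧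
    (P[{ω | θ ω = true} | E]).toReal < 1 ∧
    ∀ T : ℝ,
      (P[{ω | θ ω = true} | E]).toReal /
          (1 - (P[{ω | θ ω = true} | E]).toReal) > T ↔
      (∏ j ∈ univ.filter (fun j : Fin d => (j : ℕ) < m),
        (if y j = 1 then ((k j : ℝ) / n) / μ j
          else (1 - (k j : ℝ) / n) / (1 - μ j))) > T := by
  set s : Finset (Fin n) := univ.filter (fun i : Fin n => (i : ℕ) < n - 1)
  set V : Ω → Fin n × Fin d → ℕ := fun ω p => X p.1 p.2 ω
  set A : Set (Fin n × Fin d → ℕ) :=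
    {v | ∀ j : {j : Fin d // (j : ℕ) < m}, ∑ i ∈ s, v (i, j) = k j - y j}
  set B : Set (Fin n × Fin d → ℕ) :=
    {v | ∀ j : {j : Fin d // (j : ℕ) < m}, ∑ i, v (i, j) = k j}
  have hE' : E = {ω | if θ ω = true then V ω ∈ A else V ω ∈ B} := by
    ext ω
    simp only [hE, Set.mem_ofPred_eq,
      hX.forall_add_sum_eq_iff hm hmd (fun j hj => (hyk j hj).2.1) hrep,
      hX.forall_iff_forall_lt hm hmd (c := fun j v => ∑ i, v i = k j)
        fun j hj => by simp only [(hrep j hj).1]]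
    rfl
  have hs : #s = n - 1 := by simp [s, Fin.card_filter_val_lt]
  have hPA : P.real (V ⁻¹' A) = ∏ j ∈ univ.filter (fun j : Fin d => (j : ℕ) < m),
      binomialWeight (n - 1) (k j - y j) (μ j) :=
    hs ▸ hX.measureReal_forall_sum_eq s (fun j => k j - y j)
  have hPB : P.real (V ⁻¹' B) = ∏ j ∈ univ.filter (fun j : Fin d => (j : ℕ) < m),
      binomialWeight n (k j) (μ j) := by
    have h := hX.measureReal_forall_sum_eq univ k
    rwa [card_univ, Fintype.card_fin] at h
  have hB₀ : 0 < P.real (V ⁻¹' B) := hPB ▸ prod_pos fun j hj =>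
    have hj := (mem_filter.mp hj).2
    binomialWeight_pos (hyk j hj).2.2 (hμ j hj).1 (hμ j hj).2
  obtain ⟨hpos, hlt, hodds⟩ := posterior_odds_eq hθmeas
    (measurable_pi_lambda V fun p => hX.1 p.1 p.2) hθindep .of_discrete .of_discrete hB₀
    (by rw [measureReal_def, hθhalf]; norm_num) hE'
  refine ⟨hpos, hlt, fun T => ?_⟩
  rw [hodds, measureReal_def, hθhalf, hPA, hPB, ← prod_div_distrib, prod_congr rfl fun j hj =>
    have hj := (mem_filter.mp hj).2
    binomialWeight_sub_div_binomialWeight hn (hyk j hj).1 (hyk j hj).2.1 (hyk j hj).2.2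
      (hμ j hj).1 (hμ j hj).2]
  norm_num
end
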